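/- Let μ ≥ 1 and D ≥ 2 be reals with μ ≤ D, and let t̃ > 0. There exist a natural number N ≤ 100·μ·(1 + ln D) and times s_1,…,s_N ∈ (0, t̃], depending only on t̃, μ and D, such that for every single-machine instance whose durations all lie in [1, D]: ℓ_μ(t̃) ≤ Σ_{k=1}^N ℓ(s_k). -/

import Mathlib

/-!
A job active at `t̃` under blown-up durations started `x := t̃ - a_j ∈ (0, μ d_j]` time units
ago. If `x ≤ d_j` it is active at `t̃` itself. Otherwise `1 < x ≤ μ D`, and with
`c = 1 + 1/μ` there is a `k` with `c^k < x ≤ c^(k+1)`; then the job is active at `t̃ - c^k`,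
because `x - c^k ≤ c^k / μ < x / μ ≤ d_j`. The probe times are therefore `t̃` and the
`t̃ - c^k` for the `k < K` with `c^K ≥ μ D`, and since `log c ≥ 1/(μ+1)` one may take
`K = ⌈(μ + 1) log (μ D)⌉`.
-/

open Finset
open scoped Classical

/-- Load at time `t : ℝ` of a single-machine instance with `n` jobs,
arrival times `a`, durations `d` and weights `w`: job `j` contributes
at times `t` with `a j < t ≤ a j + d j`. -/
noncomputable def singleLoad (n : ℕ) (a d w : Fin n → ℝ) (t : ℝ) : ℝ :=
  ∑ j ∈ Finset.univ.filter (fun j : Fin n => a j < t ∧ t ≤ a j + d j), w j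

open Real

lemma sum_le_sum_sum_of_forall_exists_mem {ι α β : Type*} [AddCommMonoid β] [PartialOrder β]
    [IsOrderedAddMonoid β] {w : α → β} (hw : ∀ j, 0 ≤ w j)
    {A : Finset α} {s : Finset ι} {B : ι → Finset α} (hA : ∀ j ∈ A, ∃ k ∈ s, j ∈ B k) :
    ∑ j ∈ A, w j ≤ ∑ k ∈ s, ∑ j ∈ B k, w j := by
  have hsub : A ⊆ s.sup B := fun j hj => by
    obtain ⟨k, hk, hjk⟩ := hA j hj
    exact Finset.mem_sup.2 ⟨k, hk, hjk⟩
  calc ∑ j ∈ A, w j ≤ ∑ j ∈ s.sup B, w j :=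
        Finset.sum_le_sum_of_subset_of_nonneg hsub fun j _ _ => hw j
    _ ≤ ∑ k ∈ s, ∑ j ∈ B k, w j := by
        refine Finset.apply_sup_le_sum (f := fun S => ∑ j ∈ S, w j) rfl (fun {S T} => ?_) s
        rw [Finset.sup_eq_union, ← Finset.sum_union_inter]
        exact le_add_of_nonneg_right (Finset.sum_nonneg fun j _ => hw j)

lemma singleLoad_le_sum_of_forall_exists {n N : ℕ} {a d d' w : Fin n → ℝ} (hw : ∀ j, 0 ≤ w j)
    {t : ℝ} {s : Fin N → ℝ}
    (hcover : ∀ j, t ∈ Set.Ioc (a j) (a j + d' j) → ∃ k, s k ∈ Set.Ioc (a j) (a j + d j)) :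
    singleLoad n a d' w t ≤ ∑ k, singleLoad n a d w (s k) := by
  refine sum_le_sum_sum_of_forall_exists_mem hw fun j hj => ?_
  obtain ⟨k, hk⟩ := hcover j (Finset.mem_filter.1 hj).2
  exact ⟨k, Finset.mem_univ k, Finset.mem_filter.2 ⟨Finset.mem_univ j, hk⟩⟩

lemma exists_pow_lt_le_pow_succ {R : Type*} [Semiring R] [LinearOrder R] [IsStrictOrderedRing R]
    [Archimedean R] [ExistsAddOfLE R] {c x : R} (hc : 1 < c) (hx : 1 < x) :
    ∃ k : ℕ, c ^ k < x ∧ x ≤ c ^ (k + 1) := by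
  have hex : ∃ m : ℕ, x ≤ c ^ (m + 1) := by
    obtain ⟨m, hm⟩ := pow_unbounded_of_one_lt x hc
    exact ⟨m, hm.le.trans (pow_le_pow_right₀ hc.le m.le_succ)⟩
  refine ⟨Nat.find hex, ?_, Nat.find_spec hex⟩
  rcases h : Nat.find hex with _ | m
  · simpa using hx
  · exact not_le.1 (Nat.find_min hex (h ▸ m.lt_succ_self))

lemma exists_sub_one_add_inv_pow_le {μ x d : ℝ} (hμ : 0 < μ) (hx : 1 < x) (hxd : x ≤ μ * d) :
    ∃ k : ℕ, (1 + μ⁻¹) ^ k < x ∧ x - (1 + μ⁻¹) ^ k ≤ d := by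
  obtain ⟨k, hlt, hle⟩ := exists_pow_lt_le_pow_succ (lt_add_of_pos_right 1 (inv_pos.2 hμ)) hx
  refine ⟨k, hlt, ?_⟩
  have hstep : x - (1 + μ⁻¹) ^ k ≤ (1 + μ⁻¹) ^ k / μ := by
    rw [pow_succ] at hle
    linarith [show (1 + μ⁻¹) ^ k * (1 + μ⁻¹) = (1 + μ⁻¹) ^ k + (1 + μ⁻¹) ^ k / μ by ring]
  calc x - (1 + μ⁻¹) ^ k ≤ (1 + μ⁻¹) ^ k / μ := hstep
    _ ≤ x / μ := div_le_div_of_nonneg_right hlt.le hμ.le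
    _ ≤ d := (div_le_iff₀' hμ).2 hxd

lemma inv_add_one_le_log_one_add_inv {μ : ℝ} (hμ : 0 < μ) : (μ + 1)⁻¹ ≤ log (1 + μ⁻¹) := by
  have h := one_sub_inv_le_log_of_pos (x := 1 + μ⁻¹) (by positivity)
  have hrw : 1 - (1 + μ⁻¹)⁻¹ = (μ + 1)⁻¹ := by field_simp; ring
  rwa [hrw] at h

lemma le_one_add_inv_pow_ceil {μ y : ℝ} (hμ : 0 < μ) (hy : 1 ≤ y) :
    y ≤ (1 + μ⁻¹) ^ ⌈(μ + 1) * log y⌉₊ := by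
  have hlogy : 0 ≤ log y := log_nonneg hy
  have hlogc := inv_add_one_le_log_one_add_inv hμ
  rw [← log_le_log_iff (by linarith) (by positivity), log_pow]
  calc log y = (μ + 1) * log y * (μ + 1)⁻¹ := by field_simp
    _ ≤ ⌈(μ + 1) * log y⌉₊ * log (1 + μ⁻¹) := by
        gcongr
        exact Nat.le_ceil _

-- The last probe is `t`; probes `t - c^k ≤ 0` are also replaced by `t`, which loses nothing
-- since no job with nonnegative arrival time would need them.
noncomputable def probeTimes (c t : ℝ) (K : ℕ) (k : Fin (K + 1)) : ℝ :=
  if (k : ℕ) < K ∧ c ^ (k : ℕ) < t then t - c ^ (k : ℕ) else t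

lemma probeTimes_mem_Ioc {c t : ℝ} (hc : 0 ≤ c) (ht : 0 < t) (K : ℕ) (k : Fin (K + 1)) :
    probeTimes c t K k ∈ Set.Ioc 0 t := by
  unfold probeTimes
  split_ifs with h
  · exact ⟨sub_pos.2 h.2, sub_le_self t (by positivity)⟩
  · exact ⟨ht, le_rfl⟩

lemma exists_probeTimes_mem_Ioc {μ t a d : ℝ} (hμ : 0 < μ) (ha : 0 ≤ a) (hd : 1 ≤ d) {K : ℕ}
    (hK : μ * d ≤ (1 + μ⁻¹) ^ K) (htad : t ∈ Set.Ioc a (a + μ * d)) :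
    ∃ k, probeTimes (1 + μ⁻¹) t K k ∈ Set.Ioc a (a + d) := by
  obtain ⟨hat, hta⟩ := htad
  by_cases hnow : t ≤ a + d
  · refine ⟨Fin.last K, ?_⟩
    simpa [probeTimes] using ⟨hat, hnow⟩
  obtain ⟨k, hlt, hle⟩ :=
    exists_sub_one_add_inv_pow_le hμ (by linarith) (by linarith : t - a ≤ μ * d)
  have hkK : k < K := (pow_lt_pow_iff_right₀ (lt_add_of_pos_right 1 (inv_pos.2 hμ))).1
    (hlt.trans_le (by linarith))
  refine ⟨⟨k, Nat.lt_succ_of_lt hkK⟩, ?_⟩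
  rw [probeTimes, if_pos ⟨hkK, by linarith⟩]
  constructor <;> linarith

theorem stmt7_general (μ D ttil : ℝ) (hμ : 1 ≤ μ) (hμD : μ ≤ D)
    (ht : 0 < ttil) :
    ∃ (N : ℕ) (s : Fin N → ℝ),
      (N : ℝ) ≤ 100 * μ * (1 + Real.log D) ∧
      (∀ k, 0 < s k ∧ s k ≤ ttil) ∧
      ∀ (n : ℕ) (a d w : Fin n → ℝ),
        (∀ j, 0 ≤ a j) → (∀ j, 0 ≤ w j) → (∀ j, 1 ≤ d j ∧ d j ≤ D) →
        singleLoad n a (fun j => μ * d j) w ttil ≤ ∑ k, singleLoad n a d w (s k) := by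
  have hμ0 : 0 < μ := by linarith
  set K := ⌈(μ + 1) * log (μ * D)⌉₊
  have hK : μ * D ≤ (1 + μ⁻¹) ^ K := le_one_add_inv_pow_ceil hμ0 (by nlinarith)
  refine ⟨K + 1, probeTimes (1 + μ⁻¹) ttil K, ?_,
    fun k => probeTimes_mem_Ioc (by positivity) ht K k, ?_⟩
  · have hlogμ : log μ ≤ log D := log_le_log hμ0 hμD
    have hlogD : 0 ≤ log D := log_nonneg (hμ.trans hμD)
    have hceil : (K : ℝ) < (μ + 1) * log (μ * D) + 1 :=
      Nat.ceil_lt_add_one (mul_nonneg (by linarith) (log_nonneg (by nlinarith)))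
    rw [log_mul hμ0.ne' (by linarith)] at hceil
    push_cast
    nlinarith
  · intro n a d w ha hw hd
    refine singleLoad_le_sum_of_forall_exists hw fun j hj => ?_
    exact exists_probeTimes_mem_Ioc hμ0 (ha j) (hd j).1
      ((mul_le_mul_of_nonneg_left (hd j).2 hμ0.le).trans hK) hj

/-- for `μ ≥ 1`, `D ≥ 2` with `μ ≤ D` and `t̃ > 0`, there are
`N ≤ 100·μ·(1 + ln D)` times `s₁,…,s_N ∈ (0, t̃]`, depending only on `t̃, μ, D`,
such that for every single-machine instance with durations in `[1, D]`,
the load at `t̃` after blowing up all durations by `μ` is at most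
`Σ_k ℓ(s_k)`. -/
theorem stmt7 (μ D ttil : ℝ) (hμ : 1 ≤ μ) (hD : 2 ≤ D) (hμD : μ ≤ D)
    (ht : 0 < ttil) :
    ∃ (N : ℕ) (s : Fin N → ℝ),
      (N : ℝ) ≤ 100 * μ * (1 + Real.log D) ∧
      (∀ k, 0 < s k ∧ s k ≤ ttil) ∧
      ∀ (n : ℕ) (a d w : Fin n → ℝ),
        (∀ j, 0 ≤ a j) → (∀ j, 0 ≤ w j) → (∀ j, 1 ≤ d j ∧ d j ≤ D) →
        singleLoad n a (fun j => μ * d j) w ttil ≤ ∑ k, singleLoad n a d w (s k) :=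
  stmt7_general μ D ttil hμ hμD ht
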